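/- For nonnegative integers i ≥ j and integer r ≥ 1, the r-Stirling numbers of the first kind satisfy the recurrence [i+r, j+r]_r = Σ_{k=j}^{i} C(k,j) [i+r-1, k+r-1]_{r-1}, where [n,m]_r denotes the (unsigned) r-Stirling number of the first kind. -/

import Mathlib

/-!
`rS1 r i j` is the coefficient of `X ^ j` in the rising factorial
`(X + r)(X + r + 1)⋯(X + r + i - 1)`, i.e. in `ascPochhammer i` composed with `X + r`.
Raising `r` by one amounts to substituting `X + 1` for `X`, and expanding each `(X + 1) ^ k`
binomially yields the recurrence.
-/

open Finset

/-- The unsigned `r`-Stirling numbers of the first kind: `rS1 r i j = [i+r, j+r]_r`,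
characterized by `∑_j [i+r, j+r]_r x^j = (x+r)(x+r+1)⋯(x+r+i-1)`. -/
def rS1 (r : ℕ) : ℕ → ℕ → ℕ
  | 0, 0 => 1
  | 0, _ + 1 => 0
  | i + 1, 0 => (r + i) * rS1 r i 0
  | i + 1, j + 1 => (r + i) * rS1 r i (j + 1) + rS1 r i j

open Polynomial

theorem Polynomial.coeff_comp_X_add_one {R : Type*} [CommSemiring R] (p : R[X]) (j : ℕ) :
    (p.comp (X + 1)).coeff j = ∑ k ∈ range (p.natDegree + 1), k.choose j * p.coeff k := by
  conv_lhs => rw [p.as_sum_range_C_mul_X_pow]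
  simp only [sum_comp, mul_comp, C_comp, X_pow_comp, finsetSum_coeff, coeff_C_mul,
    coeff_X_add_one_pow, mul_comm (p.coeff _)]

theorem coeff_ascPochhammer_comp_X_add_C (r i j : ℕ) :
    ((ascPochhammer ℕ i).comp (X + C r)).coeff j = rS1 r i j := by
  induction i generalizing j with
  | zero => cases j <;> simp [rS1, coeff_one]
  | succ i ih =>
    have hfactor : (X + (i : ℕ[X])).comp (X + C r) = X + C (r + i) := by
      rw [add_comp, X_comp, natCast_comp, C_add, add_assoc, ← C_eq_natCast, Nat.cast_id]
    rw [ascPochhammer_succ_right, mul_comp, hfactor]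
    cases j with
    | zero =>
      rw [mul_coeff_zero, ih, rS1, coeff_add, coeff_X_zero, coeff_C_zero, zero_add, mul_comm]
    | succ j => rw [mul_add, coeff_add, coeff_mul_X, coeff_mul_C, ih, ih, rS1]; ring

theorem natDegree_ascPochhammer_comp_X_add_C (r i : ℕ) :
    ((ascPochhammer ℕ i).comp (X + C r)).natDegree = i := by
  rw [natDegree_comp, ascPochhammer_natDegree, natDegree_X_add_C, mul_one]

theorem ascPochhammer_comp_X_add_C_succ (r i : ℕ) :
    (ascPochhammer ℕ i).comp (X + C (r + 1)) =
      ((ascPochhammer ℕ i).comp (X + C r)).comp (X + 1) := by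
  rw [comp_assoc, add_comp, X_comp, C_comp, C_add, C_1, add_right_comm, add_assoc]

theorem rS1_succ_eq_sum_choose_mul (s i j : ℕ) :
    rS1 (s + 1) i j = ∑ k ∈ range (i + 1), k.choose j * rS1 s i k := by
  rw [← coeff_ascPochhammer_comp_X_add_C, ascPochhammer_comp_X_add_C_succ, coeff_comp_X_add_one,
    natDegree_ascPochhammer_comp_X_add_C]
  simp only [coeff_ascPochhammer_comp_X_add_C, Nat.cast_id]

theorem rStirlingFirst_recurrence_general (i j r : ℕ) (hr : 1 ≤ r) :
    rS1 r i j = ∑ k ∈ Finset.Icc j i, k.choose j * rS1 (r - 1) i k := by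
  obtain ⟨s, rfl⟩ : ∃ s, r = s + 1 := ⟨r - 1, by omega⟩
  rw [rS1_succ_eq_sum_choose_mul, Nat.add_sub_cancel]
  refine (sum_subset (fun k hk => ?_) fun k hk hkj => ?_).symm
  · simp only [mem_Icc, mem_range] at hk ⊢; omega
  · simp only [mem_Icc, mem_range] at hk hkj
    rw [Nat.choose_eq_zero_of_lt (by omega), zero_mul]

theorem rStirlingFirst_recurrence (i j r : ℕ) (hr : 1 ≤ r) (hij : j ≤ i) :
    rS1 r i j = ∑ k ∈ Finset.Icc j i, k.choose j * rS1 (r - 1) i k :=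
  rStirlingFirst_recurrence_general i j r hr
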